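/- For every triple (a, b, c) ∈ F_q × F_q × F_q with (a, b, c) ≠ (0, 0, 0), the number of x ∈ F_q with Tr(a·x^5 + b·x^3 + c·x) = 1 belongs to the set {2^(2s−1), 2^(2s−1) − 2^(s−1), 2^(2s−1) + 2^(s−1), 2^(2s−1) − 2^s, 2^(2s−1) + 2^s, 2^(2s−1) − 2^(s+1), 2^(2s−1) + 2^(s+1)}; equivalently, the exponential sum S(a,b,c) = Σ_{x ∈ F_q} (−1)^{Tr(a·x^5 + b·x^3 + c·x)} belongs to {0, ±2^s, ±2^(s+1), ±2^(s+2)}. -/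

import Mathlib

open Finset

/-!
Write `Q x = Tr (a x⁵ + b x³ + c x)` and `S = ∑ₓ (-1) ^ Q x`. In characteristic 2,
`Q (x + w) + Q x + Q w = Tr (x⁴ L w)` with `L w = a w + b² w² + b⁴ w⁸ + a⁴ w¹⁶` additive, so
`S² = q ∑_{w ∈ ker L} (-1) ^ Q w`. As `Q` is additive on `ker L`, this sum is `0` or `|ker L|`,
and `|ker L|` is a power of 2 which is at most 16 when `(a, b) ≠ 0`, since `ker L` consists of
roots of a nonzero polynomial of degree at most 16. Hence `S² = 0` or `S² = 2 ^ (2s + e)` with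
`e ≤ 4`; then `e` is even and `S ∈ {0, ±2ˢ, ±2ˢ⁺¹, ±2ˢ⁺²}`, and the count is `(q - S) / 2`.
-/

def signChar : AddChar (ZMod 2) ℤ := AddChar.zmodChar 2 (ζ := -1) (by norm_num)

lemma signChar_eq (u : ZMod 2) : signChar u = 1 - 2 * if u = 1 then 1 else 0 := by
  fin_cases u <;> rfl

theorem sum_signChar_eq_card_sub {ι : Type*} [Fintype ι] (g : ι → ZMod 2) :
    ∑ x, signChar (g x) = Fintype.card ι - 2 * #{x | g x = 1} := by
  simp only [signChar_eq, sum_sub_distrib, ← mul_sum, sum_const, card_univ, nsmul_eq_mul,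
    mul_one]
  rw [sum_boole]

section CharacterSum

variable {G : Type*} [AddCommGroup G] [Fintype G]

theorem sum_signChar_eq_zero {g : G →+ ZMod 2} (hg : g ≠ 0) : ∑ x, signChar (g x) = 0 := by
  obtain ⟨x, hx⟩ := DFunLike.ne_iff.1 hg
  have h : ∀ u : ZMod 2, u ≠ 0 → signChar u ≠ 1 := by decide
  exact AddChar.sum_eq_zero_iff_ne_zero.2
    (AddChar.ne_zero_iff.2 ⟨x, h _ hx⟩ : signChar.compAddMonoidHom g ≠ 0)

theorem sum_signChar_eq_zero_or_card (g : G →+ ZMod 2) :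
    ∑ x, signChar (g x) = 0 ∨ ∑ x, signChar (g x) = Fintype.card G := by
  classical
  have := AddChar.sum_eq_ite (signChar.compAddMonoidHom g)
  split_ifs at this
  · exact Or.inr this
  · exact Or.inl this

end CharacterSum

theorem Int.eq_two_pow_or_eq_neg_two_pow_of_sq {S : ℤ} {n : ℕ} (h : S ^ 2 = 2 ^ n) :
    ∃ k, n = 2 * k ∧ (S = 2 ^ k ∨ S = -2 ^ k) := by
  have habs : S.natAbs ^ 2 = 2 ^ n := by
    rw [← Int.natAbs_pow, h]; rfl
  obtain ⟨k, -, hk⟩ := (Nat.dvd_prime_pow Nat.prime_two).1 (Dvd.intro _ (by rw [← sq, habs]))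
  have hn : 2 ^ n = 2 ^ (2 * k) := by rw [← habs, hk, ← pow_mul, mul_comm]
  refine ⟨k, Nat.pow_right_injective le_rfl hn, ?_⟩
  rcases Int.natAbs_eq S with hS | hS <;> rw [hS, hk] <;> simp

theorem eq_two_pow_pred_of_sub_eq_zero {N m : ℕ} (hm : m ≠ 0)
    (h : (2 : ℤ) ^ m - 2 * N = 0) : N = 2 ^ (m - 1) := by
  obtain ⟨m, rfl⟩ := Nat.exists_eq_succ_of_ne_zero hm
  simp only [pow_succ, Nat.succ_sub_one] at h ⊢
  have : (N : ℤ) = 2 ^ m := by linarith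
  exact_mod_cast this

theorem eq_two_pow_pred_sub_of_sub_eq {N m t : ℕ} (hm : m ≠ 0) (ht : t ≠ 0)
    (h : (2 : ℤ) ^ m - 2 * N = 2 ^ t) : N = 2 ^ (m - 1) - 2 ^ (t - 1) := by
  obtain ⟨m, rfl⟩ := Nat.exists_eq_succ_of_ne_zero hm
  obtain ⟨t, rfl⟩ := Nat.exists_eq_succ_of_ne_zero ht
  simp only [pow_succ, Nat.succ_sub_one] at h ⊢
  have : N + 2 ^ t = 2 ^ m := by linarith
  omega

theorem eq_two_pow_pred_add_of_sub_eq_neg {N m t : ℕ} (hm : m ≠ 0) (ht : t ≠ 0)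
    (h : (2 : ℤ) ^ m - 2 * N = -2 ^ t) : N = 2 ^ (m - 1) + 2 ^ (t - 1) := by
  obtain ⟨m, rfl⟩ := Nat.exists_eq_succ_of_ne_zero hm
  obtain ⟨t, rfl⟩ := Nat.exists_eq_succ_of_ne_zero ht
  simp only [pow_succ, Nat.succ_sub_one] at h ⊢
  have : (N : ℤ) = 2 ^ m + 2 ^ t := by linarith
  exact_mod_cast this

section FiniteFieldCharTwo

variable {F : Type*} [Field F] [Fintype F] [Algebra (ZMod 2) F]

local notation "Tr" => Algebra.trace (ZMod 2) F

instance charP_two_of_algebra_zmod : CharP F 2 := charP_of_injective_algebraMap' (ZMod 2) 2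

theorem trace_sq (z : F) : Tr (z ^ 2) = Tr z := by
  simpa [FiniteField.coe_frobeniusAlgEquivOfAlgebraic, ZMod.card] using
    Algebra.trace_eq_of_algEquiv (FiniteField.frobeniusAlgEquivOfAlgebraic (ZMod 2) F) z

theorem trace_pow_two_pow (z : F) (n : ℕ) : Tr (z ^ 2 ^ n) = Tr z := by
  induction n with
  | zero => simp
  | succ n ih => rw [pow_succ, pow_mul, trace_sq, ih]

theorem sum_signChar_trace_mul [DecidableEq F] (y : F) :
    ∑ x, signChar (Tr (y * x)) = if y = 0 then (Fintype.card F : ℤ) else 0 := by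
  split_ifs with hy
  · simp [hy]
  obtain ⟨t, ht⟩ := Algebra.trace_surjective (ZMod 2) F 1
  refine sum_signChar_eq_zero (g := (Tr).toAddMonoidHom.comp (AddMonoidHom.mulLeft y)) ?_
  exact DFunLike.ne_iff.2 ⟨y⁻¹ * t, by simp [hy, ht]⟩

theorem sum_signChar_trace_pow_two_pow_mul [DecidableEq F] (n : ℕ) (y : F) :
    ∑ x, signChar (Tr (x ^ 2 ^ n * y)) = if y = 0 then (Fintype.card F : ℤ) else 0 := by
  rw [← sum_signChar_trace_mul]
  exact Fintype.sum_bijective _ (bijective_iterateFrobenius F 2 n) _ _ fun x => by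
    rw [iterateFrobenius_def, mul_comm]

/-- `(x, w) ↦ Tr (x ^ 4 * polarMap a b w)` is the polar bilinear form of
`x ↦ Tr (a * x ^ 5 + b * x ^ 3)`. -/
def polarMap (a b : F) : F →+ F where
  toFun w := a * w + b ^ 2 * w ^ 2 + b ^ 4 * w ^ 8 + a ^ 4 * w ^ 16
  map_zero' := by simp
  map_add' u v := by
    have h (n : ℕ) : (u + v) ^ 2 ^ n = u ^ 2 ^ n + v ^ 2 ^ n := add_pow_char_pow u v 2 n
    have h2 := h 1
    have h8 := h 3
    have h16 := h 4
    norm_num at h2 h8 h16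
    rw [h2, h8, h16]
    ring

noncomputable def quinticTrace (a b c x : F) : ZMod 2 := Tr (a * x ^ 5 + b * x ^ 3 + c * x)

theorem trace_pow_four_mul_polarMap (a b x w : F) :
    Tr (x ^ 4 * polarMap a b w) =
      Tr (a * x ^ 4 * w + b * x ^ 2 * w + b * x * w ^ 2 + a * x * w ^ 4) := by
  have h : x ^ 4 * polarMap a b w = a * x ^ 4 * w + (b * x ^ 2 * w) ^ 2 ^ 1 +
      (b * x * w ^ 2) ^ 2 ^ 2 + (a * x * w ^ 4) ^ 2 ^ 2 := by
    simp only [polarMap, AddMonoidHom.coe_mk, ZeroHom.coe_mk]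
    ring
  simp only [h, map_add, trace_pow_two_pow]

theorem quinticTrace_add (a b c x w : F) :
    quinticTrace a b c (x + w) =
      quinticTrace a b c x + quinticTrace a b c w + Tr (x ^ 4 * polarMap a b w) := by
  have h2 : (x + w) ^ 2 = x ^ 2 + w ^ 2 := by simpa using add_pow_char_pow x w 2 1
  have h4 : (x + w) ^ 4 = x ^ 4 + w ^ 4 := by simpa using add_pow_char_pow x w 2 2
  have h : a * (x + w) ^ 5 + b * (x + w) ^ 3 + c * (x + w) =
      (a * x ^ 5 + b * x ^ 3 + c * x) + (a * w ^ 5 + b * w ^ 3 + c * w) +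
        (a * x ^ 4 * w + b * x ^ 2 * w + b * x * w ^ 2 + a * x * w ^ 4) := by
    rw [show (x + w) ^ 5 = (x + w) ^ 4 * (x + w) by ring,
      show (x + w) ^ 3 = (x + w) ^ 2 * (x + w) by ring, h2, h4]
    ring
  rw [quinticTrace, h, map_add, map_add, trace_pow_four_mul_polarMap, quinticTrace, quinticTrace]

section Radical

variable [DecidableEq F]

theorem sq_sum_signChar_quinticTrace (a b c : F) :
    (∑ x, signChar (quinticTrace a b c x)) ^ 2 =
      Fintype.card F * ∑ w : (polarMap a b).ker, signChar (quinticTrace a b c w) := by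
  have hpair : ∀ x w, signChar (quinticTrace a b c x) * signChar (quinticTrace a b c (x + w)) =
      signChar (quinticTrace a b c w) * signChar (Tr (x ^ 4 * polarMap a b w)) := by
    intro x w
    rw [← AddChar.map_add_eq_mul, ← AddChar.map_add_eq_mul, quinticTrace_add]
    congr 1
    grind
  calc (∑ x, signChar (quinticTrace a b c x)) ^ 2
      = ∑ x, ∑ w, signChar (quinticTrace a b c x) * signChar (quinticTrace a b c (x + w)) := by
        rw [sq, sum_mul_sum]
        exact sum_congr rfl fun x _ =>
          (Fintype.sum_equiv (Equiv.addLeft x) _ _ fun _ => rfl).symm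
    _ = ∑ w, signChar (quinticTrace a b c w) * ∑ x, signChar (Tr (x ^ 4 * polarMap a b w)) := by
        simp only [hpair, mul_sum]
        exact sum_comm
    _ = ∑ w with polarMap a b w = 0, signChar (quinticTrace a b c w) * Fintype.card F := by
        have h := sum_signChar_trace_pow_two_pow_mul (F := F) 2
        norm_num at h
        simp only [h, mul_ite, mul_zero, sum_filter]
    _ = _ := by
        rw [← sum_mul, mul_comm]
        congr 1
        exact sum_subtype _ (by simp) _

theorem sum_signChar_quinticTrace_ker (a b c : F) :
    ∑ w : (polarMap a b).ker, signChar (quinticTrace a b c w) = 0 ∨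
      ∑ w : (polarMap a b).ker, signChar (quinticTrace a b c w) =
        Fintype.card (polarMap a b).ker :=
  sum_signChar_eq_zero_or_card (G := (polarMap a b).ker)
    { toFun w := quinticTrace a b c w
      map_zero' := by simp [quinticTrace]
      map_add' x w := by simp [quinticTrace_add, AddMonoidHom.mem_ker.1 w.2] }

theorem card_ker_polarMap_le {a b : F} (hab : a ≠ 0 ∨ b ≠ 0) :
    Fintype.card (polarMap a b).ker ≤ 16 := by
  open Polynomial in
  let P : F[X] := C a * X + C (b ^ 2) * X ^ 2 + C (b ^ 4) * X ^ 8 + C (a ^ 4) * X ^ 16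
  have hP : P ≠ 0 := by
    rcases hab with ha | hb
    · refine ne_of_apply_ne (coeff · 16) ?_
      simp only [P, coeff_add, coeff_C_mul_X_pow, coeff_C_mul_X]
      norm_num [ha]
    · refine ne_of_apply_ne (coeff · 8) ?_
      simp only [P, coeff_add, coeff_C_mul_X_pow, coeff_C_mul_X]
      norm_num [hb]
  have hdeg : P.natDegree ≤ 16 := by
    simp only [P]
    compute_degree
  rw [Fintype.card_subtype]
  refine (card_le_degree_of_subset_roots fun w hw => ?_).trans hdeg
  simp only [mem_val, mem_filter, mem_univ, true_and, AddMonoidHom.mem_ker] at hw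
  rw [mem_roots hP, IsRoot, ← hw]
  simp [P, polarMap]

end Radical

theorem sum_signChar_quinticTrace_eq {s : ℕ} (hcard : Fintype.card F = 2 ^ (2 * s)) {a b c : F}
    (habc : (a, b, c) ≠ (0, 0, 0)) :
    ∑ x, signChar (quinticTrace a b c x) = 0 ∨
      ∃ j ≤ 2, ∑ x, signChar (quinticTrace a b c x) = 2 ^ (s + j) ∨
        ∑ x, signChar (quinticTrace a b c x) = -2 ^ (s + j) := by
  classical
  by_cases hab : a = 0 ∧ b = 0
  · obtain ⟨rfl, rfl⟩ := hab
    have hc : c ≠ 0 := by rintro rfl; exact habc rfl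
    left
    simpa [quinticTrace, hc] using sum_signChar_trace_mul c
  have hsq := sq_sum_signChar_quinticTrace a b c
  rcases sum_signChar_quinticTrace_ker a b c with hzero | hcardK
  · left
    rw [hzero, mul_zero] at hsq
    exact pow_eq_zero_iff two_ne_zero |>.1 hsq
  right
  obtain ⟨e, -, he⟩ : ∃ e ≤ 2 * s, Fintype.card (polarMap a b).ker = 2 ^ e := by
    rw [← Nat.card_eq_fintype_card]
    refine (Nat.dvd_prime_pow Nat.prime_two).1 ?_
    simpa [hcard] using AddSubgroup.card_addSubgroup_dvd_card (polarMap a b).ker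
  have he4 : e ≤ 4 := by
    have := he ▸ card_ker_polarMap_le (not_and_or.1 hab)
    exact (Nat.pow_le_pow_iff_right (by norm_num)).1 (this.trans (by norm_num : 16 ≤ 2 ^ 4))
  rw [hcardK, he, hcard] at hsq
  push_cast at hsq
  rw [← pow_add] at hsq
  obtain ⟨k, hk, hS⟩ := Int.eq_two_pow_or_eq_neg_two_pow_of_sq hsq
  exact ⟨k - s, by omega, by rwa [show s + (k - s) = k by omega]⟩

end FiniteFieldCharTwo

theorem stmt_14_general (s : ℕ)
    (F : Type) [Field F] [Fintype F] [Algebra (ZMod 2) F]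
    (hcard : Fintype.card F = 2 ^ (2 * s)) :
    ∀ a b c : F, (a, b, c) ≠ (0, 0, 0) →
      Nat.card {x : F | Algebra.trace (ZMod 2) F (a * x ^ 5 + b * x ^ 3 + c * x) = 1} ∈
        ({2 ^ (2 * s - 1), 2 ^ (2 * s - 1) - 2 ^ (s - 1), 2 ^ (2 * s - 1) + 2 ^ (s - 1),
          2 ^ (2 * s - 1) - 2 ^ s, 2 ^ (2 * s - 1) + 2 ^ s,
          2 ^ (2 * s - 1) - 2 ^ (s + 1), 2 ^ (2 * s - 1) + 2 ^ (s + 1)} : Set ℕ) := by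
  intro a b c habc
  have hs : s ≠ 0 := by
    rintro rfl
    simpa [hcard] using Fintype.one_lt_card (α := F)
  have hcount := sum_signChar_eq_card_sub (quinticTrace a b c)
  rw [hcard, Nat.cast_pow, Nat.cast_ofNat] at hcount
  rw [Nat.card_eq_fintype_card, Fintype.card_subtype]
  change #{x | quinticTrace a b c x = 1} ∈ _
  rcases sum_signChar_quinticTrace_eq hcard habc with h0 | ⟨j, hj, hS | hS⟩
  · rw [eq_two_pow_pred_of_sub_eq_zero (by omega) (hcount.symm.trans h0)]
    simp
  · rw [eq_two_pow_pred_sub_of_sub_eq (by omega) (by omega) (hcount.symm.trans hS)]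
    interval_cases j <;> simp
  · rw [eq_two_pow_pred_add_of_sub_eq_neg (by omega) (by omega) (hcount.symm.trans hS)]
    interval_cases j <;> simp

theorem stmt_14 (s : ℕ) (hs : 2 ≤ s)
    (F : Type) [Field F] [Fintype F] [Algebra (ZMod 2) F]
    (hcard : Fintype.card F = 2 ^ (2 * s)) :
    ∀ a b c : F, (a, b, c) ≠ (0, 0, 0) →
      Nat.card {x : F | Algebra.trace (ZMod 2) F (a * x ^ 5 + b * x ^ 3 + c * x) = 1} ∈
        ({2 ^ (2 * s - 1), 2 ^ (2 * s - 1) - 2 ^ (s - 1), 2 ^ (2 * s - 1) + 2 ^ (s - 1),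
          2 ^ (2 * s - 1) - 2 ^ s, 2 ^ (2 * s - 1) + 2 ^ s,
          2 ^ (2 * s - 1) - 2 ^ (s + 1), 2 ^ (2 * s - 1) + 2 ^ (s + 1)} : Set ℕ) :=
  stmt_14_general s F hcard
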